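/- Let S be a generalized left-symmetric algebra with commutation factor ε and let M, N be S-bimodules. Define on M ⊗ N the actions x·(m⊗n) := (x·m − ε(α,β) m·x) ⊗ n + ε(α,β) m ⊗ (x·n) and (m⊗n)·x := m ⊗ (n·x), for x ∈ S_α, m ∈ M_β, n ∈ N. Then M ⊗ N with these actions is an S-bimodule, i.e., both identities (x·y)·u − x·(y·u) = ε(α,β')((y·x)·u − y·(x·u)) and (x·u)·y − x·(u·y) = ε(α,δ)((u·x)·y − u·(x·y)) hold for homogeneous elements (where u ∈ (M⊗N)_δ, y ∈ S_{β'}). -/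

import Mathlib

/-!
With the degree signs `ε` understood, `ρ_x = L_x − R_x` (`twistAct`) turns every `S`-bimodule into
a module over the sub-adjacent Lie algebra of `S`: the first bimodule identity says that `L` is
one, and the second, `[L_x, R_y] = R_{xy} − R_y R_x`, makes the `R`-terms of
`[ρ_x, ρ_y] − ρ_{[x,y]}` cancel. The left action on `M ⊗ N` is `ρ ⊗ 1 + 1 ⊗ L`, a tensor product
of two such modules (the cross terms cancel because `ε(α,β) ε(β,α) = 1`), and the right action
`1 ⊗ R` commutes with `ρ ⊗ 1`, so the second identity on `M ⊗ N` is `m ⊗` the second identity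
of `N`.
-/

open scoped TensorProduct

def IsCommutationFactor {k Γ : Type*} [Field k] [AddCommGroup Γ] (ε : Γ → Γ → k) : Prop :=
  (∀ α β, ε α β * ε β α = 1) ∧
  (∀ α β γ, ε α (β + γ) = ε α β * ε α γ) ∧
  (∀ α β γ, ε (α + β) γ = ε α γ * ε β γ)

section

variable {k Γ S M N : Type*} [Field k] [AddCommGroup Γ]
  [AddCommGroup S] [Module k S] [AddCommGroup M] [Module k M] [AddCommGroup N] [Module k N]

/-- The left action of `x ∈ S_α` on a pure tensor `m ⊗ n` with `m ∈ M_β`: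
`x·(m⊗n) = (x·m − ε(α,β) m·x) ⊗ n + ε(α,β) m ⊗ (x·n)`. -/
noncomputable def tensLAct (ε : Γ → Γ → k) (lM : S →ₗ[k] M →ₗ[k] M) (rM : M →ₗ[k] S →ₗ[k] M)
    (lN : S →ₗ[k] N →ₗ[k] N) (α β : Γ) (x : S) (m : M) (n : N) : M ⊗[k] N :=
  (lM x m - ε α β • rM m x) ⊗ₜ[k] n + ε α β • m ⊗ₜ[k] (lN x n)

end

section

variable {k Γ S M N : Type*} [Field k]
  [AddCommGroup S] [Module k S] [AddCommGroup M] [Module k M] [AddCommGroup N] [Module k N]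
  {ε : Γ → Γ → k} {mul : S →ₗ[k] S →ₗ[k] S}
  {lM : S →ₗ[k] M →ₗ[k] M} {rM : M →ₗ[k] S →ₗ[k] M} {lN : S →ₗ[k] N →ₗ[k] N}

noncomputable def twistAct (ε : Γ → Γ → k) (lM : S →ₗ[k] M →ₗ[k] M) (rM : M →ₗ[k] S →ₗ[k] M)
    (α γ : Γ) (x : S) (m : M) : M :=
  lM x m - ε α γ • rM m x

theorem tensLAct_eq_twistAct_tmul (α γ : Γ) (x : S) (m : M) (n : N) :
    tensLAct ε lM rM lN α γ x m n = twistAct ε lM rM α γ x m ⊗ₜ n + ε α γ • m ⊗ₜ lN x n :=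
  rfl

variable [AddCommGroup Γ]

theorem IsCommutationFactor.apply_swap_eq_inv (hε : IsCommutationFactor ε) (α β : Γ) :
    ε β α = (ε α β)⁻¹ :=
  eq_inv_of_mul_eq_one_left (hε.1 β α)

theorem IsCommutationFactor.apply_ne_zero (hε : IsCommutationFactor ε) (α β : Γ) : ε α β ≠ 0 :=
  left_ne_zero_of_mul_eq_one (hε.1 α β)

theorem twistAct_leftSymm {𝒜 : Γ → Submodule k S} {ℳ : Γ → Submodule k M}
    (hε : IsCommutationFactor ε)
    (hbm1 : ∀ ⦃α β : Γ⦄ ⦃x y : S⦄ (m : M), x ∈ 𝒜 α → y ∈ 𝒜 β →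
      lM (mul x y) m - lM x (lM y m) = ε α β • (lM (mul y x) m - lM y (lM x m)))
    (hbm2 : ∀ ⦃α γ : Γ⦄ ⦃x : S⦄ ⦃m : M⦄ (y : S), x ∈ 𝒜 α → m ∈ ℳ γ →
      rM (lM x m) y - lM x (rM m y) = ε α γ • (rM (rM m x) y - rM m (mul x y)))
    {α β γ : Γ} {x y : S} {m : M} (hx : x ∈ 𝒜 α) (hy : y ∈ 𝒜 β) (hm : m ∈ ℳ γ) :
    twistAct ε lM rM (α + β) γ (mul x y) m -
        twistAct ε lM rM α (β + γ) x (twistAct ε lM rM β γ y m) =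
      ε α β • (twistAct ε lM rM (α + β) γ (mul y x) m -
        twistAct ε lM rM β (α + γ) y (twistAct ε lM rM α γ x m)) := by
  have hba := hε.apply_swap_eq_inv α β
  have hab := hε.apply_ne_zero α β
  obtain ⟨-, hrow, hcol⟩ := hε
  simp only [twistAct, map_sub, map_smul, LinearMap.sub_apply, LinearMap.smul_apply, hrow, hcol,
    hba, smul_sub, smul_smul]
  linear_combination (norm := match_scalars <;> (field_simp; try ring))
    hbm1 m hx hy - ε β γ • hbm2 y hx hm + (ε α β * ε α γ) • hbm2 x hy hm

theorem tensLAct_leftSymm (hε : IsCommutationFactor ε) {α β γ : Γ} {x y : S} {m : M} {n : N}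
    (hM : twistAct ε lM rM (α + β) γ (mul x y) m -
        twistAct ε lM rM α (β + γ) x (twistAct ε lM rM β γ y m) =
      ε α β • (twistAct ε lM rM (α + β) γ (mul y x) m -
        twistAct ε lM rM β (α + γ) y (twistAct ε lM rM α γ x m)))
    (hN : lN (mul x y) n - lN x (lN y n) = ε α β • (lN (mul y x) n - lN y (lN x n))) :
    tensLAct ε lM rM lN (α + β) γ (mul x y) m n -
        (tensLAct ε lM rM lN α (β + γ) x (twistAct ε lM rM β γ y m) n +
          ε β γ • tensLAct ε lM rM lN α γ x m (lN y n)) =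
      ε α β • (tensLAct ε lM rM lN (α + β) γ (mul y x) m n -
        (tensLAct ε lM rM lN β (α + γ) y (twistAct ε lM rM α γ x m) n +
          ε α γ • tensLAct ε lM rM lN β γ y m (lN x n))) := by
  have hba := hε.apply_swap_eq_inv α β
  have hab := hε.apply_ne_zero α β
  obtain ⟨-, hrow, hcol⟩ := hε
  have hM' := congrArg (· ⊗ₜ[k] n) hM
  have hN' := congrArg (m ⊗ₜ[k] ·) hN
  simp only [TensorProduct.sub_tmul, ← TensorProduct.smul_tmul', TensorProduct.tmul_sub,
    TensorProduct.tmul_smul] at hM' hN'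
  simp only [tensLAct_eq_twistAct_tmul, hrow, hcol, hba]
  linear_combination (norm := match_scalars <;> (field_simp; try ring))
    hM' + (ε α γ * ε β γ) • hN'

theorem tensLAct_rightAct_comm (hε : IsCommutationFactor ε) {rN : N →ₗ[k] S →ₗ[k] N}
    {α γ ν : Γ} {x y : S} {m : M} {n : N}
    (hN : rN (lN x n) y - lN x (rN n y) = ε α ν • (rN (rN n x) y - rN n (mul x y))) :
    (twistAct ε lM rM α γ x m ⊗ₜ[k] rN n y + ε α γ • m ⊗ₜ[k] rN (lN x n) y) -
        tensLAct ε lM rM lN α γ x m (rN n y) =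
      ε α (γ + ν) • (m ⊗ₜ[k] rN (rN n x) y - m ⊗ₜ[k] rN n (mul x y)) := by
  have hN' := congrArg (m ⊗ₜ[k] ·) hN
  simp only [TensorProduct.tmul_sub, TensorProduct.tmul_smul] at hN'
  simp only [tensLAct_eq_twistAct_tmul, hε.2.1, smul_sub, mul_smul]
  linear_combination (norm := module) ε α γ • hN'

end

section

variable {k Γ S M N : Type*} [Field k] [AddCommGroup Γ]
  [AddCommGroup S] [Module k S] [AddCommGroup M] [Module k M] [AddCommGroup N] [Module k N]

theorem stmt5_general
    (ε : Γ → Γ → k) (𝒜 : Γ → Submodule k S) (ℳ : Γ → Submodule k M) (𝒩 : Γ → Submodule k N)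
    (mul : S →ₗ[k] S →ₗ[k] S)
    (lM : S →ₗ[k] M →ₗ[k] M) (rM : M →ₗ[k] S →ₗ[k] M)
    (lN : S →ₗ[k] N →ₗ[k] N) (rN : N →ₗ[k] S →ₗ[k] N)
    (hε : IsCommutationFactor ε)
    (hbm1M : ∀ ⦃α β : Γ⦄ ⦃x y : S⦄ (m : M), x ∈ 𝒜 α → y ∈ 𝒜 β →
      lM (mul x y) m - lM x (lM y m) = ε α β • (lM (mul y x) m - lM y (lM x m)))
    (hbm2M : ∀ ⦃α γ : Γ⦄ ⦃x : S⦄ ⦃m : M⦄ (y : S), x ∈ 𝒜 α → m ∈ ℳ γ →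
      rM (lM x m) y - lM x (rM m y) = ε α γ • (rM (rM m x) y - rM m (mul x y)))
    (hbm1N : ∀ ⦃α β : Γ⦄ ⦃x y : S⦄ (n : N), x ∈ 𝒜 α → y ∈ 𝒜 β →
      lN (mul x y) n - lN x (lN y n) = ε α β • (lN (mul y x) n - lN y (lN x n)))
    (hbm2N : ∀ ⦃α γ : Γ⦄ ⦃x : S⦄ ⦃n : N⦄ (y : S), x ∈ 𝒜 α → n ∈ 𝒩 γ →
      rN (lN x n) y - lN x (rN n y) = ε α γ • (rN (rN n x) y - rN n (mul x y)))
    {α β γ ν : Γ} {x y : S} {m : M} {n : N}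
    (hx : x ∈ 𝒜 α) (hy : y ∈ 𝒜 β) (hm : m ∈ ℳ γ) (hn : n ∈ 𝒩 ν) :
    -- first bimodule identity on the homogeneous pure tensor `m ⊗ n`
    (tensLAct ε lM rM lN (α + β) γ (mul x y) m n -
        (tensLAct ε lM rM lN α (β + γ) x (lM y m - ε β γ • rM m y) n +
          ε β γ • tensLAct ε lM rM lN α γ x m (lN y n)) =
      ε α β • (tensLAct ε lM rM lN (α + β) γ (mul y x) m n -
        (tensLAct ε lM rM lN β (α + γ) y (lM x m - ε α γ • rM m x) n +
          ε α γ • tensLAct ε lM rM lN β γ y m (lN x n)))) ∧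
    -- second bimodule identity on the homogeneous pure tensor `m ⊗ n`
    (((lM x m - ε α γ • rM m x) ⊗ₜ[k] (rN n y) + ε α γ • m ⊗ₜ[k] (rN (lN x n) y)) -
        tensLAct ε lM rM lN α γ x m (rN n y) =
      ε α (γ + ν) • ((m ⊗ₜ[k] (rN (rN n x) y)) - m ⊗ₜ[k] (rN n (mul x y)))) :=
  ⟨tensLAct_leftSymm hε (twistAct_leftSymm hε hbm1M hbm2M hx hy hm) (hbm1N n hx hy),
    tensLAct_rightAct_comm hε (hbm2N y hx hn)⟩

/-- `M ⊗ N` with `x·(m⊗n) = (x·m − ε(α,β)m·x)⊗n + ε(α,β) m⊗(x·n)` and `(m⊗n)·x = m⊗(n·x)`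
is an `S`-bimodule: both bimodule identities hold on homogeneous pure tensors. -/
theorem stmt5 [CharZero k]
    (ε : Γ → Γ → k) (𝒜 : Γ → Submodule k S) (ℳ : Γ → Submodule k M) (𝒩 : Γ → Submodule k N)
    (mul : S →ₗ[k] S →ₗ[k] S)
    (lM : S →ₗ[k] M →ₗ[k] M) (rM : M →ₗ[k] S →ₗ[k] M)
    (lN : S →ₗ[k] N →ₗ[k] N) (rN : N →ₗ[k] S →ₗ[k] N)
    (hε : IsCommutationFactor ε)
    (hgr : ∀ ⦃α β : Γ⦄ ⦃x y : S⦄, x ∈ 𝒜 α → y ∈ 𝒜 β → mul x y ∈ 𝒜 (α + β))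
    (hlsi : ∀ ⦃α β : Γ⦄ ⦃x y : S⦄ (z : S), x ∈ 𝒜 α → y ∈ 𝒜 β →
      mul (mul x y) z - mul x (mul y z) = ε α β • (mul (mul y x) z - mul y (mul x z)))
    (hdeglM : ∀ ⦃α γ : Γ⦄ ⦃x : S⦄ ⦃m : M⦄, x ∈ 𝒜 α → m ∈ ℳ γ → lM x m ∈ ℳ (α + γ))
    (hdegrM : ∀ ⦃α γ : Γ⦄ ⦃x : S⦄ ⦃m : M⦄, x ∈ 𝒜 α → m ∈ ℳ γ → rM m x ∈ ℳ (γ + α))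
    (hdeglN : ∀ ⦃α γ : Γ⦄ ⦃x : S⦄ ⦃n : N⦄, x ∈ 𝒜 α → n ∈ 𝒩 γ → lN x n ∈ 𝒩 (α + γ))
    (hdegrN : ∀ ⦃α γ : Γ⦄ ⦃x : S⦄ ⦃n : N⦄, x ∈ 𝒜 α → n ∈ 𝒩 γ → rN n x ∈ 𝒩 (γ + α))
    (hbm1M : ∀ ⦃α β : Γ⦄ ⦃x y : S⦄ (m : M), x ∈ 𝒜 α → y ∈ 𝒜 β →
      lM (mul x y) m - lM x (lM y m) = ε α β • (lM (mul y x) m - lM y (lM x m)))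
    (hbm2M : ∀ ⦃α γ : Γ⦄ ⦃x : S⦄ ⦃m : M⦄ (y : S), x ∈ 𝒜 α → m ∈ ℳ γ →
      rM (lM x m) y - lM x (rM m y) = ε α γ • (rM (rM m x) y - rM m (mul x y)))
    (hbm1N : ∀ ⦃α β : Γ⦄ ⦃x y : S⦄ (n : N), x ∈ 𝒜 α → y ∈ 𝒜 β →
      lN (mul x y) n - lN x (lN y n) = ε α β • (lN (mul y x) n - lN y (lN x n)))
    (hbm2N : ∀ ⦃α γ : Γ⦄ ⦃x : S⦄ ⦃n : N⦄ (y : S), x ∈ 𝒜 α → n ∈ 𝒩 γ →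
      rN (lN x n) y - lN x (rN n y) = ε α γ • (rN (rN n x) y - rN n (mul x y)))
    {α β γ ν : Γ} {x y : S} {m : M} {n : N}
    (hx : x ∈ 𝒜 α) (hy : y ∈ 𝒜 β) (hm : m ∈ ℳ γ) (hn : n ∈ 𝒩 ν) :
    -- first bimodule identity on the homogeneous pure tensor `m ⊗ n`
    (tensLAct ε lM rM lN (α + β) γ (mul x y) m n -
        (tensLAct ε lM rM lN α (β + γ) x (lM y m - ε β γ • rM m y) n +
          ε β γ • tensLAct ε lM rM lN α γ x m (lN y n)) =
      ε α β • (tensLAct ε lM rM lN (α + β) γ (mul y x) m n -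
        (tensLAct ε lM rM lN β (α + γ) y (lM x m - ε α γ • rM m x) n +
          ε α γ • tensLAct ε lM rM lN β γ y m (lN x n)))) ∧
    -- second bimodule identity on the homogeneous pure tensor `m ⊗ n`
    (((lM x m - ε α γ • rM m x) ⊗ₜ[k] (rN n y) + ε α γ • m ⊗ₜ[k] (rN (lN x n) y)) -
        tensLAct ε lM rM lN α γ x m (rN n y) =
      ε α (γ + ν) • ((m ⊗ₜ[k] (rN (rN n x) y)) - m ⊗ₜ[k] (rN n (mul x y)))) :=
  stmt5_general ε 𝒜 ℳ 𝒩 mul lM rM lN rN hε hbm1M hbm2M hbm1N hbm2N hx hy hm hn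

end
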